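/- Let (G, ω) be a filling of a finite pseudo-metric space (M, ρ) and let π be a tour of G. Then π is exact if and only if ω(G) = p(M, ρ, π). Moreover, if π is an exact tour of G, then (G, ω) is a minimal parametric filling of type G, and mpf(M, ρ, G) = p(M, ρ, π) = max_{σ} p(M, ρ, σ), the maximum over all tours σ of G. -/

import Mathlib

/-!
Each edge `e` of `G` lies on the tree path from `p` to `σ p` exactly when `p` and `σ p` lie on
different sides of `e`. For a tour `σ` this happens for exactly two points (one leaving each
side), so `∑ₚ d_ω(p, σ p) = 2 ω(G)`. Since `ρ ≤ d_ω` termwise, `p(M, ρ, σ) ≤ ω(G)` for every tour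
`σ` and every filling, with equality iff every term is an equality, i.e. iff `σ` is exact.
-/

open SimpleGraph Finset

structure IsPseudoMetric {M : Type} (ρ : M → M → ℝ) : Prop where
  nonneg : ∀ p q, 0 ≤ ρ p q
  refl : ∀ p, ρ p p = 0
  symm : ∀ p q, ρ p q = ρ q p
  triangle : ∀ p q r, ρ p r ≤ ρ p q + ρ q r

/-- A tree joining a finite set `M`: a finite tree `G = (V, E)` with an injection `ι : M → V`
such that every vertex of degree 1 or 2 lies in the image of `M`. -/
structure Frame (M : Type) where
  V : Type
  [fin : Fintype V]
  [deq : DecidableEq V]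
  G : SimpleGraph V
  [dec : DecidableRel G.Adj]
  tree : G.IsTree
  ι : M → V
  inj : Function.Injective ι
  joins : ∀ v : V, G.degree v = 1 ∨ G.degree v = 2 → v ∈ Set.range ι

attribute [instance] Frame.fin Frame.deq Frame.dec

namespace Frame

variable {M : Type}

/-- The unique path between two vertices of the tree. -/
noncomputable def path (F : Frame M) (u v : F.V) : F.G.Walk u v :=
  (F.tree.existsUnique_path u v).exists.choose

/-- `d_ω(u,v)`: the sum of the weights of the edges of the unique path from `u` to `v`. -/
noncomputable def dist (F : Frame M) (w : Sym2 F.V → ℝ) (u v : F.V) : ℝ :=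
  ((F.path u v).edges.map w).sum

/-- `ω(G)`: the total weight of all edges of the tree. -/
noncomputable def weight (F : Frame M) (w : Sym2 F.V → ℝ) : ℝ :=
  ∑ e ∈ F.G.edgeFinset, w e

/-- `(G, ω)` is a filling of `(M, ρ)`: nonnegative weights and `ρ p q ≤ d_ω(ι p, ι q)`. -/
def IsFilling (F : Frame M) (w : Sym2 F.V → ℝ) (ρ : M → M → ℝ) : Prop :=
  (∀ e ∈ F.G.edgeFinset, 0 ≤ w e) ∧
  ∀ p q : M, ρ p q ≤ F.dist w (F.ι p) (F.ι q)

end Frame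

/-- `mf(M,ρ)`: the infimum of weights of fillings of `(M, ρ)`. -/
noncomputable def mf {M : Type} (ρ : M → M → ℝ) : ℝ :=
  sInf { x | ∃ F : Frame M, ∃ w : Sym2 F.V → ℝ, F.IsFilling w ρ ∧ F.weight w = x }

/-- A minimal filling: a filling whose weight equals `mf(M,ρ)`. -/
def IsMinFilling {M : Type} (F : Frame M) (w : Sym2 F.V → ℝ) (ρ : M → M → ℝ) : Prop :=
  F.IsFilling w ρ ∧ F.weight w = mf ρ

/-- A cyclic order on `M`: a permutation acting transitively (a single cycle through all of `M`). -/
def IsCyclicOrder {M : Type} (π : Equiv.Perm M) : Prop :=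
  ∀ p q : M, ∃ n : ℕ, (π ^ n) p = q

namespace Frame

variable {M : Type}

/-- The part of `M` lying, after removal of the edge `s(u,v)`, in the component of `u`. -/
def sideM (F : Frame M) (u v : F.V) : Set M :=
  { p : M | (F.G.deleteEdges {s(u, v)}).Reachable (F.ι p) u }

/-- `π` is a tour of `G` (a planar order): a cyclic order such that for every edge and
each part of the induced partition of `M` there is exactly one point leaving the part. -/
def IsTour (F : Frame M) (π : Equiv.Perm M) : Prop :=
  IsCyclicOrder π ∧
  ∀ u v : F.V, F.G.Adj u v →
    ∃! p : M, p ∈ F.sideM u v ∧ π p ∉ F.sideM u v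

end Frame

/-- The half-perimeter of `(M, ρ)` with respect to a cyclic order `π`. -/
noncomputable def halfPerim {M : Type} [Fintype M] (ρ : M → M → ℝ) (π : Equiv.Perm M) : ℝ :=
  (∑ p : M, ρ p (π p)) / 2

/-- `mpf(M, ρ, G)`: the weight of a minimal parametric filling of type `G`. -/
noncomputable def mpf {M : Type} (F : Frame M) (ρ : M → M → ℝ) : ℝ :=
  sInf { x | ∃ w : Sym2 F.V → ℝ, F.IsFilling w ρ ∧ F.weight w = x }

/-- A tour `π` is exact for the filling `(G, ω)` if `ρ(p, π p) = d_ω(p, π p)` for all `p`. -/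
def IsExactTour {M : Type} (F : Frame M) (w : Sym2 F.V → ℝ) (ρ : M → M → ℝ)
    (π : Equiv.Perm M) : Prop :=
  ∀ p : M, ρ p (π p) = F.dist w (F.ι p) (F.ι (π p))

lemma Finset.card_filter_not_mem_iff_eq_two {M : Type*} [Fintype M] {f : M → M} {S : Set M}
    [DecidablePred (· ∈ S)] (hout : ∃! p, p ∈ S ∧ f p ∉ S) (hin : ∃! p, p ∉ S ∧ f p ∈ S) :
    #{p | ¬(p ∈ S ↔ f p ∈ S)} = 2 := by
  classical
  obtain ⟨p₁, hp₁, hp₁_unique⟩ := hout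
  obtain ⟨p₂, hp₂, hp₂_unique⟩ := hin
  have hne : p₁ ≠ p₂ := fun h => hp₂.1 (h ▸ hp₁.1)
  rw [← card_pair hne]
  congr 1
  ext p
  simp only [mem_filter, mem_univ, true_and, mem_insert, mem_singleton]
  constructor
  · intro hp
    by_cases hpS : p ∈ S
    · exact Or.inl (hp₁_unique p ⟨hpS, fun h => hp (iff_of_true hpS h)⟩)
    · exact Or.inr (hp₂_unique p ⟨hpS, by_contra fun h => hp (iff_of_false hpS h)⟩)
  · rintro (rfl | rfl)
    · exact fun h => hp₁.2 (h.mp hp₁.1)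
    · exact fun h => hp₂.1 (h.mpr hp₂.2)

namespace SimpleGraph

variable {V : Type*} {G : SimpleGraph V}

lemma Reachable.deleteEdges_left_or_right {x u : V} (h : G.Reachable x u) (v : V) :
    (G.deleteEdges {s(u, v)}).Reachable x u ∨ (G.deleteEdges {s(u, v)}).Reachable x v := by
  obtain ⟨W⟩ := h
  induction W with
  | nil => exact Or.inl .rfl
  | @cons x y u hadj W ih =>
    by_cases he : s(x, y) = s(u, v)
    · rcases Sym2.eq_iff.mp he with ⟨rfl, -⟩ | ⟨rfl, -⟩
      exacts [Or.inl .rfl, Or.inr .rfl]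
    · have hxy : (G.deleteEdges {s(u, v)}).Adj x y := deleteEdges_adj.mpr ⟨hadj, he⟩
      exact ih.imp hxy.reachable.trans hxy.reachable.trans

lemma Connected.reachable_deleteEdges_iff (hG : G.Connected) (u v x y : V) :
    (G.deleteEdges {s(u, v)}).Reachable x y ↔
      ((G.deleteEdges {s(u, v)}).Reachable x u ↔ (G.deleteEdges {s(u, v)}).Reachable y u) := by
  refine ⟨fun hxy => ⟨hxy.symm.trans, hxy.trans⟩, fun hiff => ?_⟩
  by_cases hxu : (G.deleteEdges {s(u, v)}).Reachable x u
  · exact hxu.trans (hiff.mp hxu).symm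
  · have hyu : ¬(G.deleteEdges {s(u, v)}).Reachable y u := mt hiff.mpr hxu
    exact ((hG x u).deleteEdges_left_or_right v).resolve_left hxu |>.trans
      (((hG y u).deleteEdges_left_or_right v).resolve_left hyu).symm

lemma Connected.reachable_deleteEdges_right_iff_not_left (hG : G.Connected) {u v : V}
    (hb : G.IsBridge s(u, v)) (x : V) :
    (G.deleteEdges {s(u, v)}).Reachable x v ↔ ¬(G.deleteEdges {s(u, v)}).Reachable x u :=
  ⟨fun hxv hxu => hb (hxu.symm.trans hxv),
    ((hG x u).deleteEdges_left_or_right v).resolve_left⟩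

end SimpleGraph

namespace Frame

variable {M : Type} (F : Frame M)

lemma isPath_path (u v : F.V) : (F.path u v).IsPath :=
  (F.tree.existsUnique_path u v).exists.choose_spec

lemma mem_edges_path_iff_not_reachable (u v x y : F.V) :
    s(u, v) ∈ (F.path x y).edges ↔ ¬(F.G.deleteEdges {s(u, v)}).Reachable x y := by
  refine ⟨fun he hxy => ?_, (F.path x y).mem_edges_of_not_reachable_deleteEdges⟩
  obtain ⟨W, hW⟩ := reachable_deleteEdges_iff_exists_walk.mp hxy
  have hpath : W.toPath = ⟨F.path x y, F.isPath_path x y⟩ :=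
    (F.tree.isAcyclic.subsingleton_path x y).elim _ _
  exact hW (W.edges_toPath_subset_edges (by rwa [hpath]))

lemma mem_edges_path_iff_not_mem_sideM_iff {u v : F.V} (p q : M) :
    s(u, v) ∈ (F.path (F.ι p) (F.ι q)).edges ↔ ¬(p ∈ F.sideM u v ↔ q ∈ F.sideM u v) := by
  rw [mem_edges_path_iff_not_reachable, F.tree.connected.reachable_deleteEdges_iff]
  rfl

lemma sideM_swap {u v : F.V} (h : F.G.Adj u v) : F.sideM v u = (F.sideM u v)ᶜ := by
  ext p
  have hb : F.G.IsBridge s(u, v) := isAcyclic_iff_forall_adj_isBridge.mp F.tree.isAcyclic h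
  simp only [sideM, Sym2.eq_swap (a := v), Set.mem_compl_iff]
  exact F.tree.connected.reachable_deleteEdges_right_iff_not_left hb _

lemma card_filter_mem_edges_path_eq_two [Fintype M] {σ : Equiv.Perm M} (hσ : F.IsTour σ)
    {u v : F.V} (h : F.G.Adj u v) :
    #{p | s(u, v) ∈ (F.path (F.ι p) (F.ι (σ p))).edges} = 2 := by
  classical
  rw [filter_congr fun p _ => F.mem_edges_path_iff_not_mem_sideM_iff p (σ p)]
  refine card_filter_not_mem_iff_eq_two (hσ.2 u v h) ?_
  simpa only [F.sideM_swap h, Set.mem_compl_iff, not_not] using hσ.2 v u h.symm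

lemma dist_eq_sum_ite (w : Sym2 F.V → ℝ) (x y : F.V) :
    F.dist w x y = ∑ e ∈ F.G.edgeFinset, if e ∈ (F.path x y).edges then w e else 0 := by
  rw [dist, ← List.sum_toFinset w (F.isPath_path x y).isTrail.edges_nodup, ← sum_filter]
  congr 1
  ext e
  simp only [mem_filter, List.mem_toFinset, mem_edgeFinset]
  exact ⟨fun h => ⟨(F.path x y).edges_subset_edgeSet h, h⟩, And.right⟩

lemma sum_dist_eq_two_mul_weight [Fintype M] {σ : Equiv.Perm M} (hσ : F.IsTour σ)
    (w : Sym2 F.V → ℝ) : ∑ p : M, F.dist w (F.ι p) (F.ι (σ p)) = 2 * F.weight w := by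
  simp_rw [dist_eq_sum_ite]
  rw [sum_comm, weight, mul_sum]
  refine sum_congr rfl fun e he => ?_
  induction e using Sym2.ind with
  | _ u v =>
    rw [← sum_filter, sum_const, F.card_filter_mem_edges_path_eq_two hσ (mem_edgeFinset.mp he),
      nsmul_eq_mul, Nat.cast_ofNat]

variable [Fintype M] {ρ : M → M → ℝ} {w : Sym2 F.V → ℝ} {σ : Equiv.Perm M}

lemma two_mul_halfPerim_le_sum_dist (hw : F.IsFilling w ρ) :
    2 * halfPerim ρ σ ≤ ∑ p : M, F.dist w (F.ι p) (F.ι (σ p)) := by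
  rw [halfPerim, mul_div_cancel₀ _ two_ne_zero]
  exact sum_le_sum fun p _ => hw.2 p (σ p)

lemma halfPerim_le_weight (hσ : F.IsTour σ) (hw : F.IsFilling w ρ) :
    halfPerim ρ σ ≤ F.weight w := by
  have := F.two_mul_halfPerim_le_sum_dist (σ := σ) hw
  rw [F.sum_dist_eq_two_mul_weight hσ] at this
  linarith

lemma isExactTour_iff_weight_eq_halfPerim (hσ : F.IsTour σ) (hw : F.IsFilling w ρ) :
    IsExactTour F w ρ σ ↔ F.weight w = halfPerim ρ σ := by
  rw [IsExactTour, halfPerim, eq_div_iff two_ne_zero, mul_comm, ← F.sum_dist_eq_two_mul_weight hσ,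
    eq_comm, sum_eq_sum_iff_of_le fun p _ => hw.2 p (σ p)]
  simp only [mem_univ, true_implies]

end Frame

theorem stmt7_general {M : Type} [Fintype M] (ρ : M → M → ℝ)
    (F : Frame M) (w : Sym2 F.V → ℝ) (hfill : F.IsFilling w ρ)
    (π : Equiv.Perm M) (htour : F.IsTour π) :
    (IsExactTour F w ρ π ↔ F.weight w = halfPerim ρ π) ∧
    (IsExactTour F w ρ π →
      (∀ w' : Sym2 F.V → ℝ, F.IsFilling w' ρ → F.weight w ≤ F.weight w') ∧
      mpf F ρ = halfPerim ρ π ∧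
      ∀ σ : Equiv.Perm M, F.IsTour σ → halfPerim ρ σ ≤ halfPerim ρ π) := by
  have hiff := F.isExactTour_iff_weight_eq_halfPerim htour hfill
  refine ⟨hiff, fun hexact => ?_⟩
  have hw : F.weight w = halfPerim ρ π := hiff.mp hexact
  have hmin : ∀ w', F.IsFilling w' ρ → F.weight w ≤ F.weight w' :=
    fun w' hw' => hw ▸ F.halfPerim_le_weight htour hw'
  refine ⟨hmin, ?_, fun σ hσ => hw ▸ F.halfPerim_le_weight hσ hfill⟩
  rw [mpf, ← hw]
  exact IsLeast.csInf_eq ⟨⟨w, hfill, rfl⟩, by rintro _ ⟨w', hw', rfl⟩; exact hmin w' hw'⟩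

theorem stmt7 {M : Type} [Fintype M] (ρ : M → M → ℝ) (hρ : IsPseudoMetric ρ)
    (F : Frame M) (w : Sym2 F.V → ℝ) (hfill : F.IsFilling w ρ)
    (π : Equiv.Perm M) (htour : F.IsTour π) :
    (IsExactTour F w ρ π ↔ F.weight w = halfPerim ρ π) ∧
    (IsExactTour F w ρ π →
      (∀ w' : Sym2 F.V → ℝ, F.IsFilling w' ρ → F.weight w ≤ F.weight w') ∧
      mpf F ρ = halfPerim ρ π ∧
      ∀ σ : Equiv.Perm M, F.IsTour σ → halfPerim ρ σ ≤ halfPerim ρ π) :=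
  stmt7_general ρ F w hfill π htour
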